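/- arXiv:1605.07798 — 2 statements merged into one kernel-verified Lean document; each statement's English description precedes it below -/
import Mathlib

section
/- Let A be an additive poset and a_0 < a_1 < ... < a_n a strictly increasing chain in A. Then the elements b_i = a_{i-1} + a_i (i = 1,...,n) are pairwise independent nonzero elements, each independent from a_0, and each b_i satisfies b_i ≤ a_i. -/
/-- An additive poset: an abelian group with a partial order satisfying
(∗): `b ≤ a → c ≤ a → b + c ≤ a` and (∗∗): `a ≤ b → a ≤ c → a ≤ a + b + c`. -/
class AdditivePoset (A : Type*) extends AddCommGroup A, PartialOrder A where
  add_le_of_le : ∀ a b c : A, b ≤ a → c ≤ a → b + c ≤ a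
  le_add_add : ∀ a b c : A, a ≤ b → a ≤ c → a ≤ a + b + c

/-!
Every additive poset has exponent 2: (∗) and (∗∗) with all arguments equal to `x` pinch
`x + x + x` to `x`. If `x ≤ y`, then (∗) gives `x + y ≤ y`; the link `b_i ≤ a_i` of the chain
then puts each `b_i` below every later `a_j`, and (∗∗) makes an element independent of the sum
of any two elements above it. Independence is symmetric because `(x + y) + x = y`.
-/

namespace AdditivePoset

variable {A : Type*} [AdditivePoset A]

def Independent (x y : A) : Prop := x ≤ x + y

theorem add_self_eq_zero (x : A) : x + x = 0 := by
  have hle : x + (x + x) ≤ x :=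
    add_le_of_le x x (x + x) le_rfl (add_le_of_le x x x le_rfl le_rfl)
  have hge : x ≤ x + x + x := le_add_add x x x le_rfl le_rfl
  have h : x + (x + x) = x + 0 := by
    rw [add_zero]
    exact le_antisymm hle (by rwa [← add_assoc])
  exact add_left_cancel h

theorem add_ne_zero_of_ne {x y : A} (h : x ≠ y) : x + y ≠ 0 := fun h0 =>
  h (add_left_cancel (h0.trans (add_self_eq_zero x).symm)).symm

theorem add_le_of_le_left {x y : A} (h : x ≤ y) : x + y ≤ y :=
  add_le_of_le y x y h le_rfl

theorem independent_add_of_le_of_le {x y z : A} (hy : x ≤ y) (hz : x ≤ z) :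
    Independent x (y + z) := by
  rw [Independent, ← add_assoc]
  exact le_add_add x y z hy hz

theorem Independent.symm {x y : A} (h : Independent x y) : Independent y x := by
  have hy : x + y + x = y := by
    rw [add_right_comm, add_self_eq_zero, zero_add]
  have hle : x + y + x ≤ x + y := add_le_of_le (x + y) (x + y) x le_rfl h
  rwa [hy, add_comm] at hle

end AdditivePoset

open AdditivePoset in
theorem stmt14 {A : Type*} [AdditivePoset A] (n : ℕ) (c : Fin (n + 1) → A)
    (hc : StrictMono c) :
    (∀ i : Fin n, c i.castSucc + c i.succ ≠ 0) ∧
    (∀ i j : Fin n, i ≠ j →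
      c i.castSucc + c i.succ ≤ (c i.castSucc + c i.succ) + (c j.castSucc + c j.succ)) ∧
    (∀ i : Fin n, c 0 ≤ c 0 + (c i.castSucc + c i.succ)) ∧
    (∀ i : Fin n, c i.castSucc + c i.succ ≤ c i.succ) := by
  have hstep (i : Fin n) : c i.castSucc < c i.succ := hc Fin.castSucc_lt_succ
  have hb (i : Fin n) : c i.castSucc + c i.succ ≤ c i.succ := add_le_of_le_left (hstep i).le
  have hindep (i j : Fin n) (hij : i < j) :
      Independent (c i.castSucc + c i.succ) (c j.castSucc + c j.succ) := by
    have hbj : c i.castSucc + c i.succ ≤ c j.castSucc :=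
      (hb i).trans (hc.monotone (Fin.succ_le_castSucc_iff.2 hij))
    exact independent_add_of_le_of_le hbj (hbj.trans (hstep j).le)
  refine ⟨fun i => add_ne_zero_of_ne (hstep i).ne, ?_, fun i => ?_, hb⟩
  · intro i j hij
    rcases hij.lt_or_gt with h | h
    exacts [hindep i j h, (hindep j i h).symm]
  · have h0 : c 0 ≤ c i.castSucc := hc.monotone (Fin.zero_le _)
    exact independent_add_of_le_of_le h0 (h0.trans (hstep i).le)
end

section
/- In any additive poset, for independent elements a and b one has A^{a+b} = A^a ∩ A^b, where A^x denotes the set of elements independent from x. -/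
/-- In an additive poset every element has order 2. -/
lemma AdditivePoset.sq {A : Type*} [AdditivePoset A] (x : A) : x + x = 0 := by
  have h1 : x + x ≤ x := AdditivePoset.add_le_of_le x x x le_rfl le_rfl
  have h2 : x ≤ x + x + x := AdditivePoset.le_add_add x x x le_rfl le_rfl
  have h3 : x + x + x ≤ x := AdditivePoset.add_le_of_le x (x + x) x h1 le_rfl
  have h4 : x + x + x = x := le_antisymm h3 h2
  have : x + x = x + x + x - x := by abel
  rw [this, h4, sub_self]

theorem stmt16 {A : Type*} [AdditivePoset A] (a b : A) (hab : a ≤ a + b) :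
    {c : A | a + b ≤ (a + b) + c} = {c : A | a ≤ a + c} ∩ {c : A | b ≤ b + c} := by
  have sq := AdditivePoset.sq (A := A)
  -- symmetry: b ≤ a + b
  have hba : b ≤ a + b := by
    have h := AdditivePoset.add_le_of_le (a + b) a (a + b) hab le_rfl
    have e : a + (a + b) = b := by
      rw [show a + (a + b) = (a + a) + b by abel, sq, zero_add]
    rwa [e] at h
  ext c
  simp only [Set.mem_setOf_eq, Set.mem_inter_iff]
  constructor
  · intro hc
    have ha' : a ≤ a + b + c := hab.trans hc
    have hb' : b ≤ a + b + c := by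
      have h := AdditivePoset.add_le_of_le (a + b + c) a (a + b) ha' hc
      have e : a + (a + b) = b := by
        rw [show a + (a + b) = (a + a) + b by abel, sq, zero_add]
      rwa [e] at h
    constructor
    · have h := AdditivePoset.le_add_add a (a + b) (a + b + c) hab ha'
      have e : a + (a + b) + (a + b + c) = a + c := by
        rw [show a + (a + b) + (a + b + c) = (a + a) + (b + b) + (a + c) by abel,
          sq, sq, zero_add, zero_add]
      rwa [e] at h
    · have h := AdditivePoset.le_add_add b (a + b) (a + b + c) hba hb'
      have e : b + (a + b) + (a + b + c) = b + c := by
        rw [show b + (a + b) + (a + b + c) = (a + a) + (b + b) + (b + c) by abel,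
          sq, sq, zero_add, zero_add]
      rwa [e] at h
  · rintro ⟨hac, hbc⟩
    have ha' : a ≤ a + b + c := by
      have h := AdditivePoset.le_add_add a (a + b) (a + c) hab hac
      have e : a + (a + b) + (a + c) = a + b + c := by
        rw [show a + (a + b) + (a + c) = (a + a) + (a + b + c) by abel, sq, zero_add]
      rwa [e] at h
    have hb' : b ≤ a + b + c := by
      have h := AdditivePoset.le_add_add b (a + b) (b + c) hba hbc
      have e : b + (a + b) + (b + c) = a + b + c := by
        rw [show b + (a + b) + (b + c) = (b + b) + (a + b + c) by abel, sq, zero_add]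
      rwa [e] at h
    exact AdditivePoset.add_le_of_le (a + b + c) a b ha' hb'
end
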